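/- arXiv:2410.11678 — 2 statements merged into one kernel-verified Lean document; each statement's English description precedes it below -/
import Mathlib

section
/- For the Gauss law ρ = Δ^m E with E ∈ C_c^∞(ℝ^d), the moment ∫_{ℝ^d} |x|^{2n} q(x) ρ(x) dx vanishes for every homogeneous harmonic polynomial q of any degree l, whenever n ≤ m − 1. -/
open MeasureTheory MvPolynomial

/-- Partial derivative in direction `i` of a function on `ℝ^d`. -/
noncomputable def pd {d : ℕ} (i : Fin d) (f : (Fin d → ℝ) → ℝ) : (Fin d → ℝ) → ℝ :=
  fun x => fderiv ℝ f x (Pi.single i 1)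

/-- The Euclidean Laplacian `Δ f = ∑ i ∂_i ∂_i f`. -/
noncomputable def lap {d : ℕ} (f : (Fin d → ℝ) → ℝ) : (Fin d → ℝ) → ℝ :=
  fun x => ∑ i : Fin d, pd i (pd i f) x

/-- The Laplacian on polynomials: `Δ p = ∑ i ∂_i ∂_i p`. -/
noncomputable def plap {d : ℕ} (p : MvPolynomial (Fin d) ℝ) : MvPolynomial (Fin d) ℝ :=
  ∑ i : Fin d, pderiv i (pderiv i p)

section Aux

variable {d l : ℕ}


noncomputable def r2 (d : ℕ) : MvPolynomial (Fin d) ℝ := ∑ i : Fin d, X i ^ 2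

lemma pderiv_r2 (i : Fin d) : pderiv i (r2 d) = 2 * X i := by
  rw [r2, map_sum, Finset.sum_eq_single i]
  · rw [pderiv_pow, pderiv_X_self]; ring
  · intro j _ hj
    rw [pderiv_pow, pderiv_X_of_ne hj]; ring
  · simp

lemma euler_term (s : Fin d →₀ ℕ) (a : ℝ) (i : Fin d) :
    X i * pderiv i (monomial s a) = C ((s i : ℝ)) * monomial s a := by
  rw [pderiv_monomial]
  rcases Nat.eq_zero_or_pos (s i) with h | h
  · simp [h]
  · have hle : Finsupp.single i 1 ≤ s := by
      rwa [Finsupp.single_le_iff]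
    rw [X, monomial_mul, C_mul_monomial]
    congr 1
    · rw [add_comm, tsub_add_cancel_of_le hle]
    · ring

lemma euler (q : MvPolynomial (Fin d) ℝ) (hq : q.IsHomogeneous l) :
    ∑ i : Fin d, X i * pderiv i q = C ((l : ℝ)) * q := by
  conv_lhs => rw [q.as_sum]
  conv_rhs => rw [q.as_sum]
  simp only [map_sum, Finset.mul_sum]
  rw [Finset.sum_comm]
  refine Finset.sum_congr rfl fun s hs => ?_
  have hco : coeff s q ≠ 0 := mem_support_iff.mp hs
  have hdeg : (Finsupp.weight 1) s = l := hq hco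
  change Finsupp.weight (fun _ => 1) s = l at hdeg
  rw [← Finsupp.degree_eq_weight_one (R := ℕ)] at hdeg
  have h1 : ∑ i : Fin d, X i * pderiv i (monomial s (coeff s q))
      = ∑ i : Fin d, C ((s i : ℝ)) * monomial s (coeff s q) :=
    Finset.sum_congr rfl fun i _ => euler_term s (coeff s q) i
  rw [h1, ← Finset.sum_mul, ← map_sum]
  congr 2
  rw [← hdeg, Finsupp.degree]
  show _ = ((∑ i ∈ s.support, s i : ℕ) : ℝ)
  push_cast
  exact (Finset.sum_subset (Finset.subset_univ s.support)
    (fun i _ hi => by simp [Finsupp.notMem_support_iff.mp hi])).symm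

lemma plap_C_mul (a : ℝ) (p : MvPolynomial (Fin d) ℝ) :
    plap (C a * p) = C a * plap p := by
  simp [plap, pderiv_C_mul, Finset.mul_sum]

lemma plap_r2_mul (k : ℕ) (q : MvPolynomial (Fin d) ℝ) (hq : q.IsHomogeneous l)
    (hharm : plap q = 0) :
    plap (r2 d ^ (k + 1) * q)
      = C (((2 * (k+1) * d + 4 * k * (k+1) + 4 * (k+1) * l : ℕ) : ℝ)) * (r2 d ^ k * q) := by
  have hr2p : ∀ j : ℕ, ∀ i : Fin d,
      pderiv i (r2 d ^ j) = C ((2 * j : ℕ) : ℝ) * (X i * r2 d ^ (j-1)) := by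
    intro j i
    rw [pderiv_pow, pderiv_r2, map_natCast (C : ℝ →+* MvPolynomial (Fin d) ℝ)]
    push_cast
    ring
  have Hi : ∀ i : Fin d, pderiv i (pderiv i (r2 d ^ (k+1) * q)) =
      C (((2 * (k+1) : ℕ) : ℝ)) * (r2 d ^ k * q)
      + C (((4 * k * (k+1) : ℕ) : ℝ)) * (X i ^ 2 * (r2 d ^ (k-1) * q))
      + C (((4 * (k+1) : ℕ) : ℝ)) * (r2 d ^ k * (X i * pderiv i q))
      + r2 d ^ (k+1) * pderiv i (pderiv i q) := by
    intro i
    have e1 : pderiv i (r2 d ^ (k+1) * q)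
        = C (((2*(k+1) : ℕ) : ℝ)) * (X i * (r2 d ^ k * q)) + r2 d ^ (k+1) * pderiv i q := by
      rw [pderiv_mul, hr2p (k+1) i, Nat.add_sub_cancel]; ring
    have e2 : pderiv i (X i * (r2 d ^ k * q))
        = r2 d ^ k * q + C (((2*k : ℕ) : ℝ)) * (X i ^ 2 * (r2 d ^ (k-1) * q))
          + X i * (r2 d ^ k * pderiv i q) := by
      rw [pderiv_mul, pderiv_X_self, pderiv_mul, hr2p k i]; ring
    rw [e1, map_add, pderiv_C_mul, e2, pderiv_mul, hr2p (k+1) i, Nat.add_sub_cancel]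
    simp only [map_natCast (C : ℝ →+* MvPolynomial (Fin d) ℝ)]
    push_cast
    ring
  rw [plap, Finset.sum_congr rfl fun i _ => Hi i]
  rw [Finset.sum_add_distrib, Finset.sum_add_distrib, Finset.sum_add_distrib]
  rw [Finset.sum_const, Finset.card_univ, Fintype.card_fin]
  have h1 : ∑ i : Fin d, C (((4 * k * (k+1) : ℕ) : ℝ)) * (X i ^ 2 * (r2 d ^ (k-1) * q))
      = C (((4 * k * (k+1) : ℕ) : ℝ)) * (r2 d ^ k * q) := by
    rw [← Finset.mul_sum, ← Finset.sum_mul, ← r2]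
    cases k with
    | zero => norm_num
    | succ j => rw [Nat.add_sub_cancel, pow_succ]; ring
  have h2 : ∑ i : Fin d, C (((4 * (k+1) : ℕ) : ℝ)) * (r2 d ^ k * (X i * pderiv i q))
      = C (((4 * (k+1) : ℕ) : ℝ)) * (C ((l : ℝ)) * (r2 d ^ k * q)) := by
    rw [← Finset.mul_sum, ← Finset.mul_sum, euler q hq]; ring_nf
  have h3 : ∑ i : Fin d, r2 d ^ (k+1) * pderiv i (pderiv i q) = 0 := by
    rw [← Finset.mul_sum]
    have : ∑ i : Fin d, pderiv i (pderiv i q) = plap q := rfl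
    rw [this, hharm, mul_zero]
  rw [h1, h2, h3, add_zero]
  simp only [map_natCast (C : ℝ →+* MvPolynomial (Fin d) ℝ), nsmul_eq_mul]
  push_cast
  ring

lemma plap_iter_C_mul (j : ℕ) (a : ℝ) (p : MvPolynomial (Fin d) ℝ) :
    plap^[j] (C a * p) = C a * plap^[j] p := by
  induction j generalizing p with
  | zero => simp
  | succ j ih => rw [Function.iterate_succ_apply, Function.iterate_succ_apply, plap_C_mul, ih]

lemma plap_iter_r2_zero (q : MvPolynomial (Fin d) ℝ) (hq : q.IsHomogeneous l)
    (hharm : plap q = 0) (k : ℕ) :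
    plap^[k + 1] (r2 d ^ k * q) = 0 := by
  induction k with
  | zero => simpa using hharm
  | succ k ih =>
      rw [Function.iterate_succ_apply, plap_r2_mul k q hq hharm,
        plap_iter_C_mul, ih, mul_zero]


lemma hasFDerivAt_eval (p : MvPolynomial (Fin d) ℝ) (x : Fin d → ℝ) :
    HasFDerivAt (fun y => eval y p)
      (∑ i : Fin d, eval x (pderiv i p) •
        (ContinuousLinearMap.proj (R := ℝ) (φ := fun _ : Fin d => ℝ) i)) x := by
  induction p using MvPolynomial.induction_on with
  | C a =>
      simp only [eval_C, pderiv_C, map_zero, zero_smul, Finset.sum_const_zero]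
      exact hasFDerivAt_const a x
  | add p q hp hq =>
      simp only [eval_add, map_add, add_smul, Finset.sum_add_distrib]
      exact hp.add hq
  | mul_X p i hp =>
      have hXi : HasFDerivAt (fun y : Fin d → ℝ => y i)
          (ContinuousLinearMap.proj (R := ℝ) (φ := fun _ : Fin d => ℝ) i) x :=
        (ContinuousLinearMap.proj (R := ℝ) (φ := fun _ : Fin d => ℝ) i).hasFDerivAt
      have h := hp.mul hXi
      simp only [eval_mul, eval_X]
      convert h using 1
      all_goals try rfl
      have : ∀ j : Fin d, eval x (pderiv j (p * X i)) •
          (ContinuousLinearMap.proj (R := ℝ) (φ := fun _ : Fin d => ℝ) j)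
          = (x i * eval x (pderiv j p)) •
            (ContinuousLinearMap.proj (R := ℝ) (φ := fun _ : Fin d => ℝ) j)
            + (if j = i then eval x p else 0) •
              (ContinuousLinearMap.proj (R := ℝ) (φ := fun _ : Fin d => ℝ) j) := by
        intro j
        rw [pderiv_mul, ← add_smul]
        congr 1
        classical
        rcases eq_or_ne j i with rfl | hji
        · simp [mul_comm]
        · simp [pderiv_X_of_ne (Ne.symm hji), hji, mul_comm]
      rw [Finset.sum_congr rfl fun j _ => this j, Finset.sum_add_distrib, add_comm]
      congr 1
      · classical
        simp [ite_smul]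
      · rw [Finset.smul_sum]
        simp only [smul_smul]

lemma differentiable_eval (p : MvPolynomial (Fin d) ℝ) :
    Differentiable ℝ (fun y : Fin d → ℝ => eval y p) :=
  fun x => (hasFDerivAt_eval p x).differentiableAt

lemma pd_eval (p : MvPolynomial (Fin d) ℝ) (i : Fin d) (x : Fin d → ℝ) :
    pd i (fun y => eval y p) x = eval x (pderiv i p) := by
  classical
  rw [pd, (hasFDerivAt_eval p x).fderiv]
  rw [ContinuousLinearMap.sum_apply]
  rw [Finset.sum_eq_single i]
  · simp
  · intro j _ hj
    simp [Pi.single_eq_of_ne hj]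
  · simp

lemma pd_contDiff {f : (Fin d → ℝ) → ℝ} (i : Fin d) (hf : ContDiff ℝ (⊤ : ℕ∞) f) :
    ContDiff ℝ (⊤ : ℕ∞) (pd i f) :=
  (hf.fderiv_right (by simp)).clm_apply contDiff_const

lemma pd_compact {f : (Fin d → ℝ) → ℝ} (i : Fin d) (hf : HasCompactSupport f) :
    HasCompactSupport (pd i f) :=
  (hf.fderiv (𝕜 := ℝ)).comp_left (g := fun L : (Fin d → ℝ) →L[ℝ] ℝ => L (Pi.single i 1)) rfl

lemma lap_contDiff {f : (Fin d → ℝ) → ℝ} (hf : ContDiff ℝ (⊤ : ℕ∞) f) :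
    ContDiff ℝ (⊤ : ℕ∞) (lap f) :=
  ContDiff.sum fun i _ => pd_contDiff i (pd_contDiff i hf)

lemma lap_compact {f : (Fin d → ℝ) → ℝ} (hf : HasCompactSupport f) :
    HasCompactSupport (lap f) := by
  classical
  have : ∀ s : Finset (Fin d),
      HasCompactSupport (fun x => ∑ i ∈ s, pd i (pd i f) x) := by
    intro s
    induction s using Finset.induction with
    | empty => exact (HasCompactSupport.zero : HasCompactSupport (0 : (Fin d → ℝ) → ℝ))
    | insert _ _ hi ih =>
        simp only [Finset.sum_insert hi]
        exact (pd_compact _ (pd_compact _ hf)).add ih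
  exact this Finset.univ

lemma lap_iter_contDiff {f : (Fin d → ℝ) → ℝ} (hf : ContDiff ℝ (⊤ : ℕ∞) f) (k : ℕ) :
    ContDiff ℝ (⊤ : ℕ∞) (lap^[k] f) := by
  induction k with
  | zero => exact hf
  | succ k ih => rw [Function.iterate_succ_apply']; exact lap_contDiff ih

lemma lap_iter_compact {f : (Fin d → ℝ) → ℝ} (hf : HasCompactSupport f) (k : ℕ) :
    HasCompactSupport (lap^[k] f) := by
  induction k with
  | zero => exact hf
  | succ k ih => rw [Function.iterate_succ_apply']; exact lap_compact ih

lemma integrable_eval_mul {g : (Fin d → ℝ) → ℝ} (P : MvPolynomial (Fin d) ℝ)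
    (hgcont : Continuous g) (hgc : HasCompactSupport g) :
    Integrable (fun x : Fin d → ℝ => eval x P * g x) := by
  apply Continuous.integrable_of_hasCompactSupport
  · exact (differentiable_eval P).continuous.mul hgcont
  · exact HasCompactSupport.mul_left hgc

lemma ibp_pd (P : MvPolynomial (Fin d) ℝ) {g : (Fin d → ℝ) → ℝ}
    (hg : ContDiff ℝ (⊤ : ℕ∞) g) (hgc : HasCompactSupport g) (i : Fin d) :
    ∫ x : Fin d → ℝ, eval x P * pd i g x = - ∫ x : Fin d → ℝ, eval x (pderiv i P) * g x := by
  have hpd : ContDiff ℝ (⊤ : ℕ∞) (pd i g) := pd_contDiff i hg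
  have h1 : Integrable (fun x : Fin d → ℝ => eval x (pderiv i P) * g x) :=
    integrable_eval_mul _ (hg.continuous) hgc
  have h2 : Integrable (fun x : Fin d → ℝ => eval x P * pd i g x) :=
    integrable_eval_mul _ hpd.continuous (pd_compact i hgc)
  have h3 : Integrable (fun x : Fin d → ℝ => eval x P * g x) :=
    integrable_eval_mul _ (hg.continuous) hgc
  have key := integral_mul_fderiv_eq_neg_fderiv_mul_of_integrable
    (μ := (volume : Measure (Fin d → ℝ)))
    (f := fun x => eval x P) (g := g) (v := Pi.single i 1)
    (h1.congr (Filter.Eventually.of_forall fun x => by beta_reduce; rw [← pd_eval P i x]; rfl)) h2 h3 (fun x _ => (differentiable_eval P) x)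
    (fun x _ => (hg.differentiable (by simp)) x)
  calc ∫ x : Fin d → ℝ, eval x P * pd i g x
      = - ∫ x : Fin d → ℝ, fderiv ℝ (fun y => eval y P) x (Pi.single i 1) * g x := key
    _ = - ∫ x : Fin d → ℝ, eval x (pderiv i P) * g x := by
        congr 1
        exact integral_congr_ae (Filter.Eventually.of_forall fun x => by
          beta_reduce
          rw [← pd_eval P i x]; rfl)

lemma ibp_lap (P : MvPolynomial (Fin d) ℝ) {g : (Fin d → ℝ) → ℝ}
    (hg : ContDiff ℝ (⊤ : ℕ∞) g) (hgc : HasCompactSupport g) :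
    ∫ x : Fin d → ℝ, eval x P * lap g x = ∫ x : Fin d → ℝ, eval x (plap P) * g x := by
  have h1 : ∫ x : Fin d → ℝ, eval x P * lap g x
      = ∑ i : Fin d, ∫ x : Fin d → ℝ, eval x P * pd i (pd i g) x := by
    rw [← integral_finset_sum]
    · apply integral_congr_ae
      exact Filter.Eventually.of_forall fun x => by simp only [lap, Finset.mul_sum]
    · intro i _
      exact integrable_eval_mul P (pd_contDiff i (pd_contDiff i hg)).continuous
        (pd_compact i (pd_compact i hgc))
  have h2 : ∀ i : Fin d, ∫ x : Fin d → ℝ, eval x P * pd i (pd i g) x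
      = ∫ x : Fin d → ℝ, eval x (pderiv i (pderiv i P)) * g x := by
    intro i
    rw [ibp_pd P (pd_contDiff i hg) (pd_compact i hgc) i,
      ibp_pd (pderiv i P) hg hgc i, neg_neg]
  rw [h1, Finset.sum_congr rfl fun i _ => h2 i, ← integral_finset_sum]
  · apply integral_congr_ae
    refine Filter.Eventually.of_forall fun x => ?_
    simp only [plap, map_sum, Finset.sum_mul]
  · intro i _
    exact integrable_eval_mul _ hg.continuous hgc

lemma moment_iter (P : MvPolynomial (Fin d) ℝ) {g : (Fin d → ℝ) → ℝ}
    (hg : ContDiff ℝ (⊤ : ℕ∞) g) (hgc : HasCompactSupport g) (j : ℕ) :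
    ∫ x : Fin d → ℝ, eval x P * lap^[j] g x = ∫ x : Fin d → ℝ, eval x (plap^[j] P) * g x := by
  induction j generalizing g with
  | zero => rfl
  | succ j ih =>
      rw [show lap^[j+1] g = lap^[j] (lap g) from Function.iterate_succ_apply lap j g,
        ih (lap_contDiff hg) (lap_compact hgc), ibp_lap (plap^[j] P) hg hgc,
        ← Function.iterate_succ_apply' plap j P]

end Aux

theorem polyharmonic_radial_harmonic_moments_vanish
    (d m n l : ℕ) (hd : 1 ≤ d) (hm : 1 ≤ m) (hn : n ≤ m - 1)
    (E : (Fin d → ℝ) → ℝ) (hE : ContDiff ℝ (⊤ : ℕ∞) E) (hEc : HasCompactSupport E)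
    (ρ : (Fin d → ℝ) → ℝ) (hρ : ρ = lap^[m] E)
    (q : MvPolynomial (Fin d) ℝ) (hq : q.IsHomogeneous l) (hqharm : plap q = 0) :
    ∫ x : Fin d → ℝ, (∑ i : Fin d, x i ^ 2) ^ n * (MvPolynomial.eval x q) * ρ x = 0 := by
  subst hρ
  have heval : ∀ x : Fin d → ℝ,
      (∑ i : Fin d, x i ^ 2) ^ n * (MvPolynomial.eval x q) = eval x (r2 d ^ n * q) := by
    intro x
    rw [eval_mul, eval_pow]
    congr 2
    simp [r2]
  have h1 : ∫ x : Fin d → ℝ, (∑ i : Fin d, x i ^ 2) ^ n * (MvPolynomial.eval x q) * lap^[m] E x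
      = ∫ x : Fin d → ℝ, eval x (r2 d ^ n * q) * lap^[m] E x := by
    apply integral_congr_ae
    exact Filter.Eventually.of_forall fun x => by beta_reduce; rw [heval x]
  rw [h1, moment_iter (r2 d ^ n * q) hE hEc m]
  have hzero : plap^[m] (r2 d ^ n * q) = 0 := by
    obtain ⟨a, ha⟩ : ∃ a, m = a + (n + 1) := ⟨m - (n + 1), by omega⟩
    subst ha
    rw [Function.iterate_add_apply, plap_iter_r2_zero q hq hqharm n]
    exact Function.iterate_fixed (by simp [plap]) a
  rw [hzero]
  simp
end

section
/- Let E^{ij} : ℝ^d → ℝ be smooth compactly supported, symmetric and traceless, with ρ^j = ∂_i E^{ij}. Then the second traceless-vector moment ∫ [ |x|² ρ^i − 2 (ρ·x) x^i ] dx vanishes for every i. -/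
open MeasureTheory MvPolynomial

section helpers
variable {d : ℕ}

lemma pd_cont {f : (Fin d → ℝ) → ℝ} (hf : ContDiff ℝ (⊤ : ℕ∞) f) (j : Fin d) :
    Continuous (pd j f) :=
  (ContinuousLinearMap.apply ℝ ℝ (Pi.single j 1 : Fin d → ℝ)).continuous.comp
    (hf.continuous_fderiv (by simp))

lemma pd_hcs {f : (Fin d → ℝ) → ℝ} (hfc : HasCompactSupport f) (j : Fin d) :
    HasCompactSupport (pd j f) :=
  hfc.fderiv_apply ℝ (Pi.single j 1)

lemma pd_integrable {f : (Fin d → ℝ) → ℝ} (hf : ContDiff ℝ (⊤ : ℕ∞) f)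
    (hfc : HasCompactSupport f) (j : Fin d) : Integrable (pd j f) :=
  (pd_cont hf j).integrable_of_hasCompactSupport (pd_hcs hfc j)

lemma integral_pd {f : (Fin d → ℝ) → ℝ} (hf : ContDiff ℝ (⊤ : ℕ∞) f)
    (hfc : HasCompactSupport f) (j : Fin d) : ∫ x, pd j f x = 0 := by
  have h := integral_mul_fderiv_eq_neg_fderiv_mul_of_integrable (μ := volume)
      (f := fun _ : Fin d → ℝ => (1 : ℝ)) (g := f) (v := Pi.single j 1)
      (by simp [fderiv_const]) (by simpa using (show Integrable (fun x => fderiv ℝ f x (Pi.single j 1)) volume from pd_integrable hf hfc j))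
      (by simpa using (hf.continuous.integrable_of_hasCompactSupport hfc))
      (fun x _ => differentiableAt_const 1) (fun x _ => hf.differentiable (by simp) x)
  simpa [pd, fderiv_const] using h

lemma pd_mul {f g : (Fin d → ℝ) → ℝ} (hf : Differentiable ℝ f)
    (hg : Differentiable ℝ g) (j : Fin d) (x : Fin d → ℝ) :
    pd j (fun y => f y * g y) x = pd j f x * g x + f x * pd j g x := by
  simp only [pd, fderiv_fun_mul (hf x) (hg x), ContinuousLinearMap.add_apply,
    ContinuousLinearMap.smul_apply, smul_eq_mul]
  ring

lemma pd_sum {ι : Type*} (s : Finset ι) {f : ι → (Fin d → ℝ) → ℝ}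
    (hf : ∀ k, Differentiable ℝ (f k)) (j : Fin d) (x : Fin d → ℝ) :
    pd j (fun y => ∑ k ∈ s, f k y) x = ∑ k ∈ s, pd j (f k) x := by
  simp only [pd]
  rw [fderiv_fun_sum (fun k _ => (hf k x))]
  simp

lemma diff_coord (k : Fin d) : Differentiable ℝ (fun y : Fin d → ℝ => y k) :=
  (ContinuousLinearMap.proj k : (Fin d → ℝ) →L[ℝ] ℝ).differentiable

lemma pd_coord (j k : Fin d) (x : Fin d → ℝ) :
    pd j (fun y => y k) x = if k = j then 1 else 0 := by
  have : pd j (fun y : Fin d → ℝ => y k) x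
      = (ContinuousLinearMap.proj k : (Fin d → ℝ) →L[ℝ] ℝ) (Pi.single j 1) := by
    simp only [pd]
    rw [show (fun y : Fin d → ℝ => y k) = ⇑(ContinuousLinearMap.proj (R := ℝ)
      (φ := fun _ : Fin d => ℝ) k) from rfl,
      (ContinuousLinearMap.proj k : (Fin d → ℝ) →L[ℝ] ℝ).fderiv]
  rw [this]
  simp [Pi.single_apply]

lemma pd_sub {f g : (Fin d → ℝ) → ℝ} (hf : Differentiable ℝ f)
    (hg : Differentiable ℝ g) (j : Fin d) (x : Fin d → ℝ) :
    pd j (fun y => f y - g y) x = pd j f x - pd j g x := by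
  simp [pd, fderiv_fun_sub (hf x) (hg x)]

lemma pd_const_mul {f : (Fin d → ℝ) → ℝ} (hf : Differentiable ℝ f) (c : ℝ)
    (j : Fin d) (x : Fin d → ℝ) :
    pd j (fun y => c * f y) x = c * pd j f x := by
  simp [pd, fderiv_const_mul (hf x) c]

lemma hcs_sum {ι : Type*} (s : Finset ι) {f : ι → (Fin d → ℝ) → ℝ}
    (h : ∀ k, HasCompactSupport (f k)) :
    HasCompactSupport (fun x => ∑ k ∈ s, f k x) := by
  classical
  induction s using Finset.induction with
  | empty =>
      simp only [Finset.sum_empty]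
      rw [hasCompactSupport_def]
      simp
  | insert k s hk ih =>
      simp only [Finset.sum_insert hk]
      exact (h _).comp₂_left ih (by simp)

end helpers

theorem traceless_vector_charge_second_moment
    (d : ℕ) (hd : 2 ≤ d)
    (E : Fin d → Fin d → (Fin d → ℝ) → ℝ)
    (hE : ∀ i j, ContDiff ℝ (⊤ : ℕ∞) (E i j)) (hEc : ∀ i j, HasCompactSupport (E i j))
    (hsymm : ∀ i j, E i j = E j i)
    (htrace : ∀ x, ∑ i : Fin d, E i i x = 0)
    (ρ : Fin d → (Fin d → ℝ) → ℝ)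
    (hρ : ∀ j, ρ j = fun x => ∑ i : Fin d, pd i (E i j) x) :
    ∀ i : Fin d, ∫ x : Fin d → ℝ,
      ((∑ j : Fin d, x j ^ 2) * ρ i x - 2 * (∑ j : Fin d, ρ j x * x j) * x i) = 0 := by
  intro i
  classical
  have hEd : ∀ j k, Differentiable ℝ (E j k) := fun j k => (hE j k).differentiable (by simp)
  have hcoord : ∀ k : Fin d, ContDiff ℝ (⊤ : ℕ∞) (fun y : Fin d → ℝ => y k) :=
    fun k => (ContinuousLinearMap.proj k : (Fin d → ℝ) →L[ℝ] ℝ).contDiff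
  -- the vector field G whose divergence is the integrand
  set S : Fin d → (Fin d → ℝ) → ℝ := fun j y => ∑ k, y k * E j k y with hSdef
  have hSsm : ∀ j, ContDiff ℝ (⊤ : ℕ∞) (S j) :=
    fun j => ContDiff.sum fun k _ => (hcoord k).mul (hE j k)
  have hSd : ∀ j, Differentiable ℝ (S j) := fun j => (hSsm j).differentiable (by simp)
  have hScs : ∀ j, HasCompactSupport (S j) :=
    fun j => hcs_sum Finset.univ fun k =>
      (show HasCompactSupport (fun y : Fin d → ℝ => y k * E j k y) from (hEc j k).mul_left)
  set N : (Fin d → ℝ) → ℝ := fun y => ∑ k, y k ^ 2 with hNdef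
  have hNsm : ContDiff ℝ (⊤ : ℕ∞) N := ContDiff.sum fun k _ => (hcoord k).pow 2
  have hNd : Differentiable ℝ N := hNsm.differentiable (by simp)
  set G : Fin d → (Fin d → ℝ) → ℝ := fun j y => N y * E j i y - 2 * (y i * S j y) with hGdef
  have hGsm : ∀ j, ContDiff ℝ (⊤ : ℕ∞) (G j) := fun j =>
    (hNsm.mul (hE j i)).sub (contDiff_const.mul ((hcoord i).mul (hSsm j)))
  have hGc : ∀ j, HasCompactSupport (G j) := by
    intro j
    have h1 : HasCompactSupport (fun y : Fin d → ℝ => N y * E j i y) := (hEc j i).mul_left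
    have h2 : HasCompactSupport (fun y : Fin d → ℝ => 2 * (y i * S j y)) :=
      HasCompactSupport.mul_left (f' := fun y : Fin d → ℝ => y i * S j y)
        ((hScs j).mul_left)
    exact h1.comp₂_left h2 (by simp)
  -- pointwise derivative computations
  have pdN : ∀ j x, pd j N x = 2 * x j := by
    intro j x
    rw [hNdef, pd_sum Finset.univ (f := fun k (y : Fin d → ℝ) => y k ^ 2)
      (fun k => (diff_coord k).pow 2) j x]
    have hterm : ∀ k : Fin d, pd j (fun y : Fin d → ℝ => y k ^ 2) x
        = (if k = j then 1 else 0) * x k + x k * (if k = j then 1 else 0) := by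
      intro k
      have hrw : (fun y : Fin d → ℝ => y k ^ 2) = fun y => y k * y k := by
        funext y; ring
      rw [hrw, pd_mul (diff_coord k) (diff_coord k), pd_coord]
    simp only [hterm, ite_mul, mul_ite, one_mul, mul_one, zero_mul, mul_zero,
      Finset.sum_add_distrib, Finset.sum_ite_eq', Finset.mem_univ, if_true]
    ring
  have pdS : ∀ j x, pd j (S j) x = E j j x + ∑ k, x k * pd j (E j k) x := by
    intro j x
    rw [hSdef]
    rw [pd_sum Finset.univ (f := fun k (y : Fin d → ℝ) => y k * E j k y)
      (fun k => (diff_coord k).mul (hEd j k)) j x]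
    have hterm : ∀ k : Fin d, pd j (fun y : Fin d → ℝ => y k * E j k y) x
        = (if k = j then 1 else 0) * E j k x + x k * pd j (E j k) x := by
      intro k
      rw [pd_mul (diff_coord k) (hEd j k), pd_coord]
    simp only [hterm, ite_mul, one_mul, zero_mul, Finset.sum_add_distrib,
      Finset.sum_ite_eq', Finset.mem_univ, if_true]
  have pdG : ∀ j x, pd j (G j) x
      = (2 * x j * E j i x + N x * pd j (E j i) x)
        - 2 * ((if i = j then 1 else 0) * S j x
          + x i * (E j j x + ∑ k, x k * pd j (E j k) x)) := by
    intro j x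
    rw [hGdef]
    have h1 : pd j (fun y => N y * E j i y - 2 * (y i * S j y)) x
        = pd j (fun y => N y * E j i y) x - pd j (fun y => 2 * (y i * S j y)) x :=
      pd_sub (hNd.mul (hEd j i)) ((differentiable_const 2).mul ((diff_coord i).mul (hSd j))) j x
    rw [h1, pd_mul hNd (hEd j i),
      pd_const_mul (f := fun y => y i * S j y) ((diff_coord i).mul (hSd j)) 2 j x,
      pd_mul (diff_coord i) (hSd j), pd_coord, pdS, pdN]
  -- the integrand is the divergence of G
  have key : ∀ x : Fin d → ℝ,
      ∑ j : Fin d, pd j (G j) x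
        = ((∑ j : Fin d, x j ^ 2) * ρ i x - 2 * (∑ j : Fin d, ρ j x * x j) * x i) := by
    intro x
    have hρ' : ∀ j, ρ j x = ∑ k : Fin d, pd k (E k j) x := fun j => by rw [hρ]
    have hδ : ∑ j : Fin d, (if i = j then (1 : ℝ) else 0) * S j x = S i x := by
      simp
    have hdouble : ∑ j : Fin d, ∑ k : Fin d, x k * pd j (E j k) x
        = ∑ k : Fin d, x k * ρ k x := by
      rw [Finset.sum_comm]
      exact Finset.sum_congr rfl fun k _ => by rw [hρ' k, Finset.mul_sum]
    have e1 : ∑ j : Fin d, x j * E j i x = S i x := by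
      rw [hSdef]
      exact Finset.sum_congr rfl fun j _ => by rw [hsymm]
    have hrho : ∑ j : Fin d, ρ j x * x j = ∑ j : Fin d, x j * ρ j x :=
      Finset.sum_congr rfl fun j _ => mul_comm _ _
    calc ∑ j : Fin d, pd j (G j) x
        = ∑ j : Fin d, ((2 * (x j * E j i x) + N x * pd j (E j i) x)
            - (2 * ((if i = j then 1 else 0) * S j x) + (2 * x i) * E j j x
              + (2 * x i) * ∑ k, x k * pd j (E j k) x)) :=
          Finset.sum_congr rfl fun j _ => by rw [pdG]; ring
      _ = (2 * ∑ j : Fin d, x j * E j i x + N x * ∑ j : Fin d, pd j (E j i) x)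
            - (2 * ∑ j : Fin d, (if i = j then 1 else 0) * S j x
              + (2 * x i) * ∑ j : Fin d, E j j x
              + (2 * x i) * ∑ j : Fin d, ∑ k, x k * pd j (E j k) x) := by
          rw [Finset.sum_sub_distrib, Finset.sum_add_distrib, Finset.sum_add_distrib,
            Finset.sum_add_distrib, ← Finset.mul_sum, ← Finset.mul_sum, ← Finset.mul_sum,
            ← Finset.mul_sum, ← Finset.mul_sum]
      _ = (2 * S i x + N x * ρ i x)
            - (2 * S i x + (2 * x i) * 0 + (2 * x i) * ∑ k, x k * ρ k x) := by
          rw [e1, hδ, htrace x, hdouble, ← hρ' i]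
      _ = ((∑ j : Fin d, x j ^ 2) * ρ i x - 2 * (∑ j : Fin d, ρ j x * x j) * x i) := by
          simp only [hNdef]
          rw [hrho]
          ring
  simp only [← key]
  rw [integral_finset_sum Finset.univ
    (fun j _ => pd_integrable (hGsm j) (hGc j) j)]
  exact Finset.sum_eq_zero fun j _ => integral_pd (hGsm j) (hGc j) j
end
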